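/- Let Σ and H₀ be real symmetric positive definite d×d matrices and H₁ a real symmetric d×d matrix. Set T := (Σ^{1/2} H₀ Σ^{1/2})^{1/2}. Then, as ε → 0, B²(Σ, H₀ + ε H₁) = B²(Σ, H₀) + ε tr(H₁) − 2ε tr( L_T^{-1}[Σ^{1/2} H₁ Σ^{1/2}] ) + 2ε² tr( L_T^{-1}[ (L_T^{-1}[Σ^{1/2} H₁ Σ^{1/2}])² ] ) + o(ε²). -/

import Mathlib

/-!
With `R = Σ^{1/2}`, `A = R H₀ R`, `B = R H₁ R` and `U ε = (A + ε B)^{1/2}` one has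
`B²(Σ, H₀ + ε H₁) = tr Σ + tr H₀ + ε tr H₁ - 2 tr (U ε)`, so it suffices to expand `U ε` to second
order around `T = U 0`. No smoothness of the square root is needed: if `M ≥ c > 0` then
`tr (Xᴴ L_M[X]) ≥ 2c ‖X‖²`, hence `2c ‖X‖ ≤ ‖L_M[X]‖` in the Frobenius norm. Applied to
`L_{U+T}[U - T] = 2 (U² - T²) = 2ε B` this gives `U - T = O(ε)`; applied to
`L_T[U - T - ε Y₁] = -(U - T)²` it gives `O(ε²)`; and applied once more to
`L_T[U - T - ε Y₁ + ε² Y₂] = -((U - T)(U - T - ε Y₁) + (U - T - ε Y₁) ε Y₁)` it gives `O(ε³)`.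
-/

open Matrix Filter Topology Asymptotics

/-- The positive semidefinite square root of a matrix (zero if the matrix is not
positive semidefinite). -/
noncomputable def psdSqrt {d : ℕ} (M : Matrix (Fin d) (Fin d) ℝ) :
    Matrix (Fin d) (Fin d) ℝ :=
  open scoped Classical in
  if h : M.PosSemidef then
    h.1.eigenvectorUnitary.1 * diagonal ((↑) ∘ (√·) ∘ h.1.eigenvalues) *
      (star h.1.eigenvectorUnitary : Matrix (Fin d) (Fin d) ℝ)
  else 0

/-- The squared Bures distance `B²(P,Q) = tr(P + Q − 2 (P^{1/2} Q P^{1/2})^{1/2})`. -/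
noncomputable def bures2 {d : ℕ} (P Q : Matrix (Fin d) (Fin d) ℝ) : ℝ :=
  (P + Q - (2 : ℝ) • psdSqrt (psdSqrt P * Q * psdSqrt P)).trace

/-- The Sylvester operator `L_M[X] = M X + X M`. -/
def sylv {d : ℕ} (M X : Matrix (Fin d) (Fin d) ℝ) : Matrix (Fin d) (Fin d) ℝ :=
  M * X + X * M

open scoped MatrixOrder ComplexOrder

lemma Asymptotics.isBigO_smul_const_self {E : Type*} [NormedAddCommGroup E] [NormedSpace ℝ E]
    (l : Filter ℝ) (C : E) : (fun ε : ℝ => ε • C) =O[l] fun ε => ε :=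
  ((isBigO_refl _ l).smul (isBigO_const_const C one_ne_zero l)).congr_right fun ε => mul_one ε

namespace Matrix

variable {m n 𝕜 : Type*} [Fintype m] [Fintype n] [RCLike 𝕜]

section Frobenius

attribute [local instance] frobeniusNormedAddCommGroup

lemma trace_conjTranspose_mul_eq_inner (X Y : Matrix m n ℝ) :
    (Xᴴ * Y).trace = inner ℝ (WithLp.toLp 2 fun i => WithLp.toLp 2 (X i) :
      PiLp 2 fun _ : m => EuclideanSpace ℝ n) (WithLp.toLp 2 fun i => WithLp.toLp 2 (Y i)) := by
  simp only [trace, diag, mul_apply, conjTranspose_apply, star_trivial, PiLp.inner_apply]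
  rw [Finset.sum_comm]
  simp [mul_comm]

lemma frobenius_norm_sq_eq_trace (X : Matrix m n ℝ) : ‖X‖ ^ 2 = (Xᴴ * X).trace := by
  rw [trace_conjTranspose_mul_eq_inner, real_inner_self_eq_norm_sq]
  rfl

lemma frobenius_abs_trace_conjTranspose_mul_le (X Y : Matrix m n ℝ) :
    |(Xᴴ * Y).trace| ≤ ‖X‖ * ‖Y‖ := by
  rw [trace_conjTranspose_mul_eq_inner]
  exact abs_real_inner_le_norm _ _

end Frobenius

variable [DecidableEq n]

lemma PosDef.exists_posSemidef_sub_smul_one {A : Matrix n n 𝕜} (hA : A.PosDef) :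
    ∃ c : ℝ, 0 < c ∧ (A - c • 1).PosSemidef := by
  cases isEmpty_or_nonempty n
  · exact ⟨1, one_pos, by rw [Subsingleton.elim (A - _) 0]; exact .zero⟩
  obtain ⟨c, hc, hcA⟩ := (CFC.exists_pos_algebraMap_le_iff hA.isStrictlyPositive.isSelfAdjoint).2
    fun x hx => hA.isStrictlyPositive.spectrum_pos hx
  exact ⟨c, hc, by rwa [Algebra.algebraMap_eq_smul_one] at hcA⟩

lemma IsHermitian.exists_posSemidef_smul_one_sub_and_add {B : Matrix n n 𝕜} (hB : B.IsHermitian) :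
    ∃ r : ℝ, (r • 1 - B).PosSemidef ∧ (B + r • 1).PosSemidef := by
  have hB' : IsSelfAdjoint B := hB
  obtain ⟨r, hr⟩ := (isCompact_iff_compactSpace.mpr inferInstance :
    IsCompact (spectrum ℝ B)).isBounded.subset_closedBall 0
  have habs : ∀ x ∈ spectrum ℝ B, |x| ≤ r := fun x hx => by simpa using hr hx
  have hle : B ≤ algebraMap ℝ _ r :=
    le_algebraMap_of_spectrum_le fun x hx => (le_abs_self x).trans (habs x hx)
  have hge : algebraMap ℝ _ (-r) ≤ B :=
    algebraMap_le_of_le_spectrum fun x hx => by linarith [neg_abs_le x, habs x hx]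
  refine ⟨r, ?_, ?_⟩
  · simpa [Algebra.algebraMap_eq_smul_one] using le_iff.mp hle
  · simpa [Algebra.algebraMap_eq_smul_one, sub_eq_add_neg] using le_iff.mp hge

lemma PosDef.eventually_posSemidef_add_smul {A B : Matrix n n 𝕜} (hA : A.PosDef)
    (hB : B.IsHermitian) : ∀ᶠ ε in 𝓝 (0 : ℝ), (A + ε • B).PosSemidef := by
  obtain ⟨c, hc, hAc⟩ := hA.exists_posSemidef_sub_smul_one
  obtain ⟨r, hrB, hBr⟩ := hB.exists_posSemidef_smul_one_sub_and_add
  have hsmall : ∀ᶠ ε in 𝓝 (0 : ℝ), |ε| * r < c :=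
    (continuous_abs.mul continuous_const).continuousAt.eventually_lt continuousAt_const
      (by simpa using hc)
  filter_upwards [hsmall] with ε hε
  rcases le_or_gt 0 ε with hε0 | hε0
  · rw [abs_of_nonneg hε0] at hε
    have hsplit : A + ε • B = (A - c • 1) + (c - ε * r) • 1 + ε • (B + r • 1) := by module
    rw [hsplit]
    exact (hAc.add (PosSemidef.one.smul (by linarith))).add (hBr.smul hε0)
  · rw [abs_of_neg hε0] at hε
    have hsplit : A + ε • B = (A - c • 1) + (c + ε * r) • 1 + (-ε) • (r • 1 - B) := by module
    rw [hsplit]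
    exact (hAc.add (PosSemidef.one.smul (by linarith))).add (hrB.smul (by linarith))

end Matrix

section SquareRoot

variable {d : ℕ} {M : Matrix (Fin d) (Fin d) ℝ}

lemma psdSqrt_eq_cfcSqrt (hM : M.PosSemidef) : psdSqrt M = CFC.sqrt M := by
  rw [psdSqrt, dif_pos hM, CFC.sqrt_eq_cfc, cfc_nnreal_eq_real _ M, hM.1.cfc_eq]
  simp only [IsHermitian.cfc, Unitary.conjStarAlgAut_apply]
  congr 2
  refine congrArg diagonal (funext fun i => ?_)
  simp [Real.coe_sqrt, Real.coe_toNNReal', max_eq_left (hM.eigenvalues_nonneg i)]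

lemma posSemidef_psdSqrt (M : Matrix (Fin d) (Fin d) ℝ) : (psdSqrt M).PosSemidef := by
  by_cases hM : M.PosSemidef
  · rw [psdSqrt_eq_cfcSqrt hM]
    exact (CFC.sqrt_nonneg M).posSemidef
  · rw [psdSqrt, dif_neg hM]
    exact .zero

lemma psdSqrt_mul_self (hM : M.PosSemidef) : psdSqrt M * psdSqrt M = M := by
  rw [psdSqrt_eq_cfcSqrt hM]
  exact CFC.sqrt_mul_sqrt_self M hM.nonneg

lemma posDef_psdSqrt (hM : M.PosDef) : (psdSqrt M).PosDef := by
  rw [psdSqrt_eq_cfcSqrt hM.posSemidef]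
  exact hM.isStrictlyPositive.sqrt.posDef

lemma bures2_eq (P Q : Matrix (Fin d) (Fin d) ℝ) :
    bures2 P Q = P.trace + Q.trace - 2 * (psdSqrt (psdSqrt P * Q * psdSqrt P)).trace := by
  simp [bures2, trace_sub, trace_add, trace_smul]

end SquareRoot

section Sylvester

attribute [local instance] frobeniusNormedRing frobeniusNormedAlgebra

variable {d : ℕ}

lemma two_mul_mul_norm_sq_le_trace_sylv {M X : Matrix (Fin d) (Fin d) ℝ} {c : ℝ}
    (hM : (M - c • 1).PosSemidef) : 2 * c * ‖X‖ ^ 2 ≤ (Xᴴ * sylv M X).trace := by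
  have h1 := (hM.conjTranspose_mul_mul_same X).trace_nonneg
  have h2 := (hM.mul_mul_conjTranspose_same X).trace_nonneg
  simp only [Matrix.mul_sub, Matrix.sub_mul, Matrix.mul_smul, Matrix.smul_mul, Matrix.mul_one,
    trace_sub, trace_smul, smul_eq_mul] at h1 h2
  rw [trace_mul_comm X, trace_mul_cycle] at h2
  rw [frobenius_norm_sq_eq_trace, sylv, Matrix.mul_add, trace_add, ← Matrix.mul_assoc,
    ← Matrix.mul_assoc]
  linarith

lemma two_mul_mul_norm_le_norm_sylv {M X : Matrix (Fin d) (Fin d) ℝ} {c : ℝ}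
    (hM : (M - c • 1).PosSemidef) : 2 * c * ‖X‖ ≤ ‖sylv M X‖ := by
  have h := (two_mul_mul_norm_sq_le_trace_sylv hM).trans
    ((le_abs_self _).trans (frobenius_abs_trace_conjTranspose_mul_le X (sylv M X)))
  rcases (norm_nonneg X).eq_or_lt with h0 | hpos
  · rw [← h0, mul_zero]
    exact norm_nonneg _
  · exact le_of_mul_le_mul_right (by linarith) hpos

lemma isBigO_sylv {α : Type*} {l : Filter α} {M X : α → Matrix (Fin d) (Fin d) ℝ} {c : ℝ}
    (hc : 0 < c) (hM : ∀ᶠ a in l, (M a - c • 1).PosSemidef) :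
    X =O[l] fun a => sylv (M a) (X a) :=
  IsBigO.of_bound (2 * c)⁻¹ <| hM.mono fun a ha => by
    rw [inv_mul_eq_div, le_div_iff₀ (by positivity)]
    linarith [two_mul_mul_norm_le_norm_sylv (X := X a) ha]

lemma sylv_add_sub (U T : Matrix (Fin d) (Fin d) ℝ) :
    sylv (U + T) (U - T) = (2 : ℝ) • (U * U - T * T) := by
  rw [sylv, two_smul]
  noncomm_ring

variable {B T Y₁ Y₂ : Matrix (Fin d) (Fin d) ℝ}

lemma sylv_sub_sub_smul {U : Matrix (Fin d) (Fin d) ℝ} {ε : ℝ}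
    (hU : U * U = T * T + ε • sylv T Y₁) : sylv T (U - T - ε • Y₁) = -((U - T) * (U - T)) := by
  have key : sylv T (U - T - ε • Y₁) - -((U - T) * (U - T)) = U * U - (T * T + ε • sylv T Y₁) := by
    simp only [sylv, mul_sub, sub_mul, mul_smul_comm, smul_mul_assoc, smul_add]
    module
  rwa [hU, sub_self, sub_eq_zero] at key

lemma sylv_sub_second_order {U : Matrix (Fin d) (Fin d) ℝ} {ε : ℝ}
    (hU : U * U = T * T + ε • sylv T Y₁) (hY₂ : sylv T Y₂ = Y₁ * Y₁) :
    sylv T (U - (T + ε • Y₁ - ε ^ 2 • Y₂)) =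
      -((U - T) * (U - T - ε • Y₁) + (U - T - ε • Y₁) * (ε • Y₁)) := by
  have key : sylv T (U - (T + ε • Y₁ - ε ^ 2 • Y₂)) -
      -((U - T) * (U - T - ε • Y₁) + (U - T - ε • Y₁) * (ε • Y₁)) =
      U * U - (T * T + ε • sylv T Y₁) + ε ^ 2 • (sylv T Y₂ - Y₁ * Y₁) := by
    simp only [sylv, mul_sub, sub_mul, mul_add, add_mul, mul_smul_comm, smul_mul_assoc, smul_add,
      smul_sub]
    module
  rwa [hU, hY₂, sub_self, sub_self, smul_zero, add_zero, sub_eq_zero] at key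

variable {U : ℝ → Matrix (Fin d) (Fin d) ℝ} {c : ℝ}

lemma isBigO_sub_of_mul_self_eq (hc : 0 < c) (hT : (T - c • 1).PosSemidef)
    (hU : ∀ᶠ ε in 𝓝 0, (U ε).PosSemidef ∧ U ε * U ε = T * T + ε • B) :
    (fun ε => U ε - T) =O[𝓝 0] fun ε => ε := by
  have hM : ∀ᶠ ε in 𝓝 0, (U ε + T - c • 1).PosSemidef :=
    hU.mono fun ε h => by rw [add_sub_assoc]; exact h.1.add hT
  refine (isBigO_sylv hc hM).trans ((isBigO_smul_const_self _ ((2 : ℝ) • B)).congr' ?_ .rfl)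
  filter_upwards [hU] with ε hε
  rw [sylv_add_sub, hε.2, add_sub_cancel_left, smul_comm]

lemma isBigO_sub_sub_smul_of_mul_self_eq (hc : 0 < c) (hT : (T - c • 1).PosSemidef)
    (hU : ∀ᶠ ε in 𝓝 0, (U ε).PosSemidef ∧ U ε * U ε = T * T + ε • B) (hY₁ : sylv T Y₁ = B) :
    (fun ε => U ε - T - ε • Y₁) =O[𝓝 0] fun ε => ε ^ 2 := by
  have hD := isBigO_sub_of_mul_self_eq hc hT hU
  refine (isBigO_sylv (M := fun _ => T) hc (.of_forall fun _ => hT)).trans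
    ((hD.mul hD).neg_left.congr' ?_ (.of_forall fun ε => (sq ε).symm))
  filter_upwards [hU] with ε hε
  rw [sylv_sub_sub_smul (hY₁ ▸ hε.2)]

lemma isBigO_sub_second_order_of_mul_self_eq (hc : 0 < c) (hT : (T - c • 1).PosSemidef)
    (hU : ∀ᶠ ε in 𝓝 0, (U ε).PosSemidef ∧ U ε * U ε = T * T + ε • B) (hY₁ : sylv T Y₁ = B)
    (hY₂ : sylv T Y₂ = Y₁ * Y₁) :
    (fun ε => U ε - (T + ε • Y₁ - ε ^ 2 • Y₂)) =O[𝓝 0] fun ε => ε ^ 3 := by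
  have hD := isBigO_sub_of_mul_self_eq hc hT hU
  have hE := isBigO_sub_sub_smul_of_mul_self_eq hc hT hU hY₁
  have hY := isBigO_smul_const_self (𝓝 0) Y₁
  have hsum : (fun ε => (U ε - T) * (U ε - T - ε • Y₁) + (U ε - T - ε • Y₁) * (ε • Y₁))
      =O[𝓝 0] fun ε => ε ^ 3 :=
    ((hD.mul hE).congr_right fun ε => by ring).add ((hE.mul hY).congr_right fun ε => by ring)
  refine (isBigO_sylv (M := fun _ => T) hc (.of_forall fun _ => hT)).trans
    (hsum.neg_left.congr' ?_ .rfl)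
  filter_upwards [hU] with ε hε
  rw [sylv_sub_second_order (hY₁ ▸ hε.2) hY₂]

lemma isLittleO_trace_sub_second_order_of_mul_self_eq (hT : T.PosDef)
    (hU : ∀ᶠ ε in 𝓝 0, (U ε).PosSemidef ∧ U ε * U ε = T * T + ε • B) (hY₁ : sylv T Y₁ = B)
    (hY₂ : sylv T Y₂ = Y₁ * Y₁) :
    (fun ε => (U ε).trace - (T.trace + ε * Y₁.trace - ε ^ 2 * Y₂.trace)) =o[𝓝 0]
      fun ε => ε ^ 2 := by
  obtain ⟨c, hc, hTc⟩ := hT.exists_posSemidef_sub_smul_one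
  have htrace : (fun ε => (U ε - (T + ε • Y₁ - ε ^ 2 • Y₂)).trace) =O[𝓝 0]
      fun ε => U ε - (T + ε • Y₁ - ε ^ 2 • Y₂) :=
    .of_bound ‖(1 : Matrix (Fin d) (Fin d) ℝ)‖ <| .of_forall fun ε => by
      simpa using frobenius_abs_trace_conjTranspose_mul_le 1 (U ε - (T + ε • Y₁ - ε ^ 2 • Y₂))
  have hexp := htrace.trans (isBigO_sub_second_order_of_mul_self_eq hc hTc hU hY₁ hY₂)
  refine (hexp.trans_isLittleO (isLittleO_pow_pow (by norm_num))).congr_left fun ε => ?_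
  simp only [trace_sub, trace_add, trace_smul, smul_eq_mul]

end Sylvester

/-- Second-order Taylor expansion of the squared Bures distance:
with `T = (Σ^{1/2} H₀ Σ^{1/2})^{1/2}`, `Y₁ = L_T⁻¹[Σ^{1/2} H₁ Σ^{1/2}]`, `Y₂ = L_T⁻¹[Y₁²]`,
`B²(Σ, H₀ + ε H₁) = B²(Σ, H₀) + ε tr H₁ − 2ε tr Y₁ + 2ε² tr Y₂ + o(ε²)` as `ε → 0`. -/
theorem bures_second_order_expansion {d : ℕ}
    (S H0 H1 : Matrix (Fin d) (Fin d) ℝ)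
    (hS : S.PosDef) (hH0 : H0.PosDef) (hH1 : H1.IsSymm)
    (T : Matrix (Fin d) (Fin d) ℝ) (hT : T = psdSqrt (psdSqrt S * H0 * psdSqrt S))
    (Y1 Y2 : Matrix (Fin d) (Fin d) ℝ)
    (hY1 : sylv T Y1 = psdSqrt S * H1 * psdSqrt S)
    (hY2 : sylv T Y2 = Y1 * Y1) :
    (fun ε : ℝ =>
        bures2 S (H0 + ε • H1)
          - (bures2 S H0 + ε * H1.trace - 2 * ε * Y1.trace + 2 * ε ^ 2 * Y2.trace))
      =o[𝓝 (0 : ℝ)] fun ε => ε ^ 2 := by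
  set R := psdSqrt S
  set A := R * H0 * R
  set B := R * H1 * R
  have hR : R.PosDef := posDef_psdSqrt hS
  have hA : A.PosDef := by
    have := hH0.conjTranspose_mul_mul_same (mulVec_injective_of_isUnit hR.isUnit)
    rwa [hR.isHermitian.eq] at this
  have hB : B.IsHermitian := by
    have := isHermitian_conjTranspose_mul_mul R (A := H1)
      (by rw [IsHermitian, conjTranspose_eq_transpose_of_trivial, hH1.eq])
    rwa [hR.isHermitian.eq] at this
  have hU : ∀ᶠ ε in 𝓝 (0 : ℝ), (psdSqrt (A + ε • B)).PosSemidef ∧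
      psdSqrt (A + ε • B) * psdSqrt (A + ε • B) = T * T + ε • B :=
    (hA.eventually_posSemidef_add_smul hB).mono fun ε hε =>
      ⟨posSemidef_psdSqrt _, by rw [psdSqrt_mul_self hε, hT, psdSqrt_mul_self hA.posSemidef]⟩
  have hexp :=
    isLittleO_trace_sub_second_order_of_mul_self_eq (hT ▸ posDef_psdSqrt hA) hU hY1 hY2
  refine (hexp.const_mul_left (-2)).congr_left fun ε => ?_
  have hsandwich : R * (H0 + ε • H1) * R = A + ε • B := by
    simp only [A, B, Matrix.mul_add, Matrix.add_mul, Matrix.mul_smul, Matrix.smul_mul]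
  rw [bures2_eq, bures2_eq, ← hT, hsandwich]
  simp only [trace_add, trace_smul, smul_eq_mul]
  ring
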